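/- For every ρ > 0, the limit as n → ∞ of ∫_ℝ e^{2|x|/(√n ρ) + 2/(n ρ²)} · erfc(|x|/√2 + √2/(√n ρ)) dx equals 2√(2/π). -/

import Mathlib

open Filter Set MeasureTheory

open Topology

/-- The complementary error function. -/
noncomputable def erfc (y : ℝ) : ℝ :=
  (2 / Real.sqrt Real.pi) * ∫ u in Set.Ioi y, Real.exp (-u ^ 2)

lemma gauss_int : Integrable (fun u : ℝ => Real.exp (-u ^ 2)) := by
  simpa using integrable_exp_neg_mul_sq (by norm_num : (0:ℝ) < 1)

lemma gauss_Ioi : ∫ u in Ioi (0:ℝ), Real.exp (-u ^ 2) = Real.sqrt Real.pi / 2 := by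
  simpa using integral_gaussian_Ioi 1

lemma erfc_nonneg (y : ℝ) : 0 ≤ erfc y := by
  apply mul_nonneg (by positivity)
  exact setIntegral_nonneg measurableSet_Ioi fun u _ => (Real.exp_pos _).le

lemma erfc_sub (y : ℝ) :
    erfc y = erfc 0 - (2 / Real.sqrt Real.pi) * ∫ u in (0:ℝ)..y, Real.exp (-u ^ 2) := by
  have h := intervalIntegral.integral_Iic_sub_Iic (gauss_int.integrableOn (s := Iic (0:ℝ)))
    (gauss_int.integrableOn (s := Iic y))
  have h0 := intervalIntegral.integral_Iic_add_Ioi (gauss_int.integrableOn (s := Iic (0:ℝ)))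
    (gauss_int.integrableOn (s := Ioi (0:ℝ)))
  have hy := intervalIntegral.integral_Iic_add_Ioi (gauss_int.integrableOn (s := Iic y))
    (gauss_int.integrableOn (s := Ioi y))
  unfold erfc
  linear_combination (2 / Real.sqrt Real.pi) * (hy - h0 - h)

lemma erfc_continuous : Continuous erfc := by
  have : Continuous fun y : ℝ => erfc 0 - (2 / Real.sqrt Real.pi) * ∫ u in (0:ℝ)..y, Real.exp (-u ^ 2) :=
    continuous_const.sub (continuous_const.mul (gauss_int.continuous_primitive 0))
  simpa [← erfc_sub] using this

lemma erfc_hasDerivAt (y : ℝ) :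
    HasDerivAt erfc (-((2 / Real.sqrt Real.pi) * Real.exp (-y ^ 2))) y := by
  have h1 : HasDerivAt (fun b => ∫ u in (0:ℝ)..b, Real.exp (-u ^ 2)) (Real.exp (-y ^ 2)) y :=
    intervalIntegral.integral_hasDerivAt_right gauss_int.intervalIntegrable
      ((Real.continuous_exp.comp (continuous_pow 2).neg).stronglyMeasurableAtFilter _ _)
      ((Real.continuous_exp.comp (continuous_pow 2).neg).continuousAt)
  have h2 : HasDerivAt (fun b => erfc 0 - (2 / Real.sqrt Real.pi) * ∫ u in (0:ℝ)..b, Real.exp (-u ^ 2))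
      (-((2 / Real.sqrt Real.pi) * Real.exp (-y ^ 2))) y := by
    simpa using ((h1.const_mul (2 / Real.sqrt Real.pi)).const_sub (erfc 0))
  exact h2.congr_of_eventuallyEq (Filter.Eventually.of_forall fun b => (erfc_sub b))

lemma erfc_le (y : ℝ) (hy : 0 ≤ y) : erfc y ≤ Real.exp (-y ^ 2) := by
  have htrans : ∫ u in Ioi y, Real.exp (-(u - y) ^ 2) = Real.sqrt Real.pi / 2 := by
    have hmp : MeasurePreserving (fun v : ℝ => v + y) volume volume :=
      measurePreserving_add_right volume y
    have := hmp.setIntegral_preimage_emb (measurableEmbedding_addRight y)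
      (fun u => Real.exp (-(u - y) ^ 2)) (Ioi y)
    simp only [add_sub_cancel_right] at this
    rw [← this]
    have : (fun v : ℝ => v + y) ⁻¹' Ioi y = Ioi 0 := by
      ext v; simp [lt_add_iff_pos_left]  -- v + y > y ↔ v > 0
    rw [this, gauss_Ioi]
  have hmono : ∫ u in Ioi y, Real.exp (-u ^ 2) ≤
      ∫ u in Ioi y, Real.exp (-y ^ 2) * Real.exp (-(u - y) ^ 2) := by
    apply setIntegral_mono_on (gauss_int.integrableOn)
    · exact (Integrable.const_mul (by
        have : Integrable (fun u : ℝ => Real.exp (-(u - y) ^ 2)) := by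
          simpa using gauss_int.comp_sub_right y
        exact this) _).integrableOn
    · exact measurableSet_Ioi
    · intro u hu
      rw [← Real.exp_add]
      apply Real.exp_le_exp.mpr
      nlinarith [mem_Ioi.mp hu]
  have hπ : 0 < Real.sqrt Real.pi := Real.sqrt_pos.mpr Real.pi_pos
  calc erfc y ≤ (2 / Real.sqrt Real.pi) * (Real.exp (-y ^ 2) * (Real.sqrt Real.pi / 2)) := by
        unfold erfc
        apply mul_le_mul_of_nonneg_left _ (by positivity)
        calc ∫ u in Ioi y, Real.exp (-u ^ 2)
            ≤ ∫ u in Ioi y, Real.exp (-y ^ 2) * Real.exp (-(u - y) ^ 2) := hmono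
          _ = Real.exp (-y ^ 2) * ∫ u in Ioi y, Real.exp (-(u - y) ^ 2) := by
              rw [integral_const_mul]
          _ = Real.exp (-y ^ 2) * (Real.sqrt Real.pi / 2) := by rw [htrans]
    _ = Real.exp (-y ^ 2) := by field_simp

lemma erfc_integrableOn_Ioi : IntegrableOn erfc (Ioi (0:ℝ)) := by
  apply MeasureTheory.Integrable.mono (gauss_int.integrableOn (s := Ioi 0))
    erfc_continuous.aestronglyMeasurable.restrict
  rw [ae_restrict_iff' measurableSet_Ioi]
  refine Filter.Eventually.of_forall fun x hx => ?_
  rw [Real.norm_eq_abs, Real.norm_eq_abs, abs_of_nonneg (erfc_nonneg x),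
    abs_of_nonneg (Real.exp_pos _).le]
  exact erfc_le x (le_of_lt hx)

lemma integral_erfc_Ioi : ∫ t in Ioi (0:ℝ), erfc t = 1 / Real.sqrt Real.pi := by
  have hπ : Real.sqrt Real.pi ≠ 0 := by positivity
  have hG : ∀ t ∈ Ici (0:ℝ), HasDerivAt
      (fun t => t * erfc t - Real.exp (-t ^ 2) / Real.sqrt Real.pi) (erfc t) t := by
    intro t _
    have h1 : HasDerivAt (fun t : ℝ => t * erfc t)
        (1 * erfc t + t * (-((2 / Real.sqrt Real.pi) * Real.exp (-t ^ 2)))) t :=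
      (hasDerivAt_id t).mul (erfc_hasDerivAt t)
    have h2 : HasDerivAt (fun t : ℝ => Real.exp (-t ^ 2) / Real.sqrt Real.pi)
        ((Real.exp (-t ^ 2) * -(2 * t ^ 1)) / Real.sqrt Real.pi) t := by
      exact (((hasDerivAt_pow 2 t).neg).exp).div_const _
    have := h1.fun_sub h2
    exact this.congr_deriv (by ring)
  have hlim : Tendsto (fun t => t * erfc t - Real.exp (-t ^ 2) / Real.sqrt Real.pi)
      atTop (𝓝 0) := by
    have hsq : Tendsto (fun t : ℝ => -t ^ 2) atTop atBot := by
      exact tendsto_neg_atTop_atBot.comp (tendsto_pow_atTop two_ne_zero)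
    have hexp : Tendsto (fun t : ℝ => Real.exp (-t ^ 2)) atTop (𝓝 0) :=
      Real.tendsto_exp_atBot.comp hsq
    have h2 : Tendsto (fun t : ℝ => Real.exp (-t ^ 2) / Real.sqrt Real.pi) atTop (𝓝 0) := by
      simpa using hexp.div_const (Real.sqrt Real.pi)
    have hte : Tendsto (fun t : ℝ => t * Real.exp (-t)) atTop (𝓝 0) := by
      simpa using Real.tendsto_pow_mul_exp_neg_atTop_nhds_zero 1
    have h1 : Tendsto (fun t : ℝ => t * erfc t) atTop (𝓝 0) := by
      apply squeeze_zero' (Filter.eventually_atTop.mpr ⟨0, fun t ht =>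
        mul_nonneg ht (erfc_nonneg t)⟩)
        (Filter.eventually_atTop.mpr ⟨1, fun t ht => ?_⟩) hte
      have h3 : erfc t ≤ Real.exp (-t ^ 2) := erfc_le t (by linarith)
      have h4 : Real.exp (-t ^ 2) ≤ Real.exp (-t) :=
        Real.exp_le_exp.mpr (by nlinarith)
      exact mul_le_mul_of_nonneg_left (le_trans h3 h4) (by linarith)
    simpa using h1.sub h2
  have := integral_Ioi_of_hasDerivAt_of_tendsto' hG erfc_integrableOn_Ioi hlim
  rw [this]
  simp

lemma integral_erfc_abs : ∫ x : ℝ, erfc (|x| / Real.sqrt 2) = 2 * Real.sqrt (2 / Real.pi) := by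
  rw [integral_comp_abs (f := fun x => erfc (x / Real.sqrt 2))]
  have h2 : (0:ℝ) < (Real.sqrt 2)⁻¹ := by positivity
  have key : ∫ x in Ioi (0:ℝ), erfc (x / Real.sqrt 2)
      = Real.sqrt 2 * ∫ x in Ioi (0:ℝ), erfc x := by
    have := integral_comp_mul_left_Ioi erfc 0 h2
    simp only [mul_zero, inv_inv, smul_eq_mul] at this
    rw [← this]
    congr 1
    ext x
    rw [div_eq_inv_mul]
  rw [key, integral_erfc_Ioi, Real.sqrt_div (by norm_num : (0:ℝ) ≤ 2)]
  ring

lemma key_bound (t x : ℝ) (ht : 0 ≤ t) :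
    Real.exp (2 * |x| * t + 2 * t ^ 2) * erfc (|x| / Real.sqrt 2 + Real.sqrt 2 * t)
      ≤ Real.exp (-(1/2 : ℝ) * x ^ 2) := by
  have h2 : Real.sqrt 2 ^ 2 = 2 := Real.sq_sqrt (by norm_num)
  have hne : Real.sqrt 2 ≠ 0 := by positivity
  have hy : 0 ≤ |x| / Real.sqrt 2 + Real.sqrt 2 * t := by positivity
  have hs : Real.sqrt 2 * Real.sqrt 2 = 2 := Real.mul_self_sqrt (by norm_num)
  have hy2 : (|x| / Real.sqrt 2 + Real.sqrt 2 * t) ^ 2 = x ^ 2 / 2 + 2 * |x| * t + 2 * t ^ 2 := by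
    field_simp
    linear_combination 2 * sq_abs x - x ^ 2 * hs + 2 * t ^ 2 * (Real.sqrt 2 * Real.sqrt 2) * hs
  calc Real.exp (2 * |x| * t + 2 * t ^ 2) * erfc (|x| / Real.sqrt 2 + Real.sqrt 2 * t)
      ≤ Real.exp (2 * |x| * t + 2 * t ^ 2)
        * Real.exp (-(|x| / Real.sqrt 2 + Real.sqrt 2 * t) ^ 2) :=
        mul_le_mul_of_nonneg_left (erfc_le _ hy) (Real.exp_pos _).le
    _ = Real.exp (-(1/2 : ℝ) * x ^ 2) := by
        rw [← Real.exp_add]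
        congr 1
        rw [hy2]
        ring

theorem integral_kernel_tendsto (ρ : ℝ) (hρ : 0 < ρ) :
    Tendsto (fun n : ℕ =>
        ∫ x : ℝ,
          Real.exp (2 * |x| / (Real.sqrt n * ρ) + 2 / (n * ρ ^ 2)) *
            erfc (|x| / Real.sqrt 2 + Real.sqrt 2 / (Real.sqrt n * ρ)))
      atTop (nhds (2 * Real.sqrt (2 / Real.pi))) := by
  set t : ℕ → ℝ := fun n => (Real.sqrt n * ρ)⁻¹ with ht_def
  have ht0 : ∀ n, 0 ≤ t n := fun n => by positivity
  have hsq : Tendsto (fun n : ℕ => Real.sqrt n) atTop atTop := by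
    apply tendsto_atTop_atTop.mpr
    intro b
    refine ⟨⌈b ^ 2⌉₊, fun n hn => ?_⟩
    have hb : (b ^ 2 : ℝ) ≤ n := le_trans (Nat.le_ceil _) (by exact_mod_cast hn)
    calc b ≤ |b| := le_abs_self b
      _ = Real.sqrt (b ^ 2) := (Real.sqrt_sq_eq_abs b).symm
      _ ≤ Real.sqrt n := Real.sqrt_le_sqrt hb
  have htlim : Tendsto t atTop (𝓝 0) :=
    tendsto_inv_atTop_zero.comp (hsq.atTop_mul_const hρ)
  have hF : ∀ (n : ℕ) (x : ℝ),
      Real.exp (2 * |x| / (Real.sqrt n * ρ) + 2 / (n * ρ ^ 2)) *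
          erfc (|x| / Real.sqrt 2 + Real.sqrt 2 / (Real.sqrt n * ρ))
        = Real.exp (2 * |x| * t n + 2 * (t n) ^ 2) *
            erfc (|x| / Real.sqrt 2 + Real.sqrt 2 * t n) := by
    intro n x
    have hsqn : Real.sqrt n ^ 2 = (n : ℝ) := Real.sq_sqrt (Nat.cast_nonneg n)
    have h1 : 2 * |x| / (Real.sqrt n * ρ) = 2 * |x| * t n := div_eq_mul_inv _ _
    have h2 : 2 / ((n : ℝ) * ρ ^ 2) = 2 * (t n) ^ 2 := by
      rw [ht_def, ← hsqn]
      ring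
    have h3 : Real.sqrt 2 / (Real.sqrt n * ρ) = Real.sqrt 2 * t n := div_eq_mul_inv _ _
    rw [h1, h2, h3]
  simp only [hF]
  have hmain : Tendsto (fun n : ℕ =>
      ∫ x : ℝ, Real.exp (2 * |x| * t n + 2 * (t n) ^ 2) *
        erfc (|x| / Real.sqrt 2 + Real.sqrt 2 * t n))
      atTop (𝓝 (∫ x : ℝ, erfc (|x| / Real.sqrt 2))) := by
    apply tendsto_integral_of_dominated_convergence
      (fun x => Real.exp (-(1/2 : ℝ) * x ^ 2))
    · intro n
      apply Continuous.aestronglyMeasurable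
      exact (Real.continuous_exp.comp
          (((continuous_const.mul continuous_abs).mul continuous_const).add continuous_const)).mul
        (erfc_continuous.comp ((continuous_abs.div_const _).add continuous_const))
    · simpa using integrable_exp_neg_mul_sq (by norm_num : (0:ℝ) < 1/2)
    · intro n
      refine Filter.Eventually.of_forall fun x => ?_
      rw [Real.norm_eq_abs, abs_of_nonneg
        (mul_nonneg (Real.exp_pos _).le (erfc_nonneg _))]
      exact key_bound (t n) x (ht0 n)
    · refine Filter.Eventually.of_forall fun x => ?_
      have hexp : Tendsto (fun n => Real.exp (2 * |x| * t n + 2 * (t n) ^ 2))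
          atTop (𝓝 1) := by
        have h1 : Tendsto (fun n => 2 * |x| * t n + 2 * (t n) ^ 2) atTop (𝓝 0) := by
          have h := (htlim.const_mul (2 * |x|)).add ((htlim.pow 2).const_mul 2)
          simp only [mul_zero, ne_eq, OfNat.ofNat_ne_zero, not_false_eq_true, zero_pow,
            add_zero] at h
          exact h
        simpa only [Real.exp_zero, Function.comp_def] using (Real.continuous_exp.continuousAt.tendsto).comp h1
      have herfc : Tendsto (fun n => erfc (|x| / Real.sqrt 2 + Real.sqrt 2 * t n))
          atTop (𝓝 (erfc (|x| / Real.sqrt 2))) := by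
        have h1 : Tendsto (fun n => |x| / Real.sqrt 2 + Real.sqrt 2 * t n)
            atTop (𝓝 (|x| / Real.sqrt 2)) := by
          have h := tendsto_const_nhds (x := |x| / Real.sqrt 2) (f := atTop (α := ℕ))
            |>.add (htlim.const_mul (Real.sqrt 2))
          simp only [mul_zero, add_zero] at h
          exact h
        exact (erfc_continuous.continuousAt.tendsto).comp h1
      simpa only [one_mul] using hexp.mul herfc
  rw [integral_erfc_abs] at hmain
  exact hmain
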